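/- Let n ≥ 1 and let f : (−∞,0) × ℝⁿ → ℝ be a smooth positive solution of the backward heat equation ∂f/∂t = −Δf that is ℤⁿ-periodic in the space variable. Set τ = −t > 0 and v = −ln f − (n/2)ln(4πτ). Then 2Δv − |∇v|² − 2n/τ ≤ 0 for all τ > 0 and all x ∈ ℝⁿ. -/

import Mathlib

open MeasureTheory Real

noncomputable section

/-- Partial derivative of `g` at `x` in the `i`-th coordinate direction. -/
def pd {n : ℕ} (i : Fin n) (g : (Fin n → ℝ) → ℝ) (x : Fin n → ℝ) : ℝ :=
  fderiv ℝ g x (Pi.single i 1)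

/-- Squared Euclidean norm of the (spatial) gradient of `g` at `x`. -/
def gradSq {n : ℕ} (g : (Fin n → ℝ) → ℝ) (x : Fin n → ℝ) : ℝ :=
  ∑ i, (pd i g x) ^ 2

/-- The (spatial) Laplacian of `g` at `x`. -/
def lap {n : ℕ} (g : (Fin n → ℝ) → ℝ) (x : Fin n → ℝ) : ℝ :=
  ∑ i, pd i (pd i g) x

/-- The `(i,j)` entry of the Hessian of `g` at `x`. -/
def hess {n : ℕ} (i j : Fin n) (g : (Fin n → ℝ) → ℝ) (x : Fin n → ℝ) : ℝ :=
  pd i (pd j g) x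

/-!
Put `H = log f` and `W = ΔH`; since `v = -H - c(t)`, we have `Δv = -W`, so it suffices to show
`τ W ≥ -n/2`. The equation `∂ₜf = -Δf` becomes `∂ₜH = -ΔH - |∇H|²`, and differentiating it with
Bochner's formula gives `∂ₜW = -ΔW - 2⟨∇H, ∇W⟩ - 2|∇²H|²`, where `|∇²H|² ≥ W²/n`.
At a minimum point of `(T - t) W` over `[t₀, T] × Tⁿ` (compactness of the torus), `∇W = 0`,
`ΔW ≥ 0` and the time derivative is `≥ 0`; this Riccati inequality forces the minimum to be
`≥ -n/2`. Letting `T → 0` gives the bound. All derivatives are directional derivatives on the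
spacetime `ℝ × ℝⁿ`, so that mixed time-space derivatives commute.
-/

open Set Filter Topology
open scoped ContDiff

theorem IsLocalMin.deriv_deriv_nonneg {g : ℝ → ℝ} {s : ℝ} (h : IsLocalMin g s)
    (hc : ContinuousAt g s) : 0 ≤ deriv (deriv g) s := by
  by_contra! hneg
  have hconst : g =ᶠ[𝓝 s] fun _ => g s :=
    (h.and (isLocalMax_of_deriv_deriv_neg hneg h.deriv_eq_zero hc)).mono
      fun _ hy => le_antisymm hy.2 hy.1
  have hzero : deriv (deriv g) s = 0 := by
    rw [hconst.deriv.deriv_eq]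
    simp
  exact hneg.ne hzero

section DirDeriv

variable {E : Type*} [NormedAddCommGroup E] [NormedSpace ℝ E]

def dirDeriv (a : E) (G : E → ℝ) (p : E) : ℝ := fderiv ℝ G p a

variable {a c p : E} {A B G : E → ℝ} {U : Set E}

theorem dirDeriv_congr (h : A =ᶠ[𝓝 p] B) : dirDeriv a A p = dirDeriv a B p := by
  rw [dirDeriv, dirDeriv, h.fderiv_eq]

theorem dirDeriv_congr_of_eqOn (hU : IsOpen U) (h : EqOn A B U) (hp : p ∈ U) :
    dirDeriv a A p = dirDeriv a B p :=
  dirDeriv_congr (eventuallyEq_of_mem (hU.mem_nhds hp) h)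

theorem dirDeriv_smul (r : ℝ) : dirDeriv (r • a) G p = r * dirDeriv a G p :=
  (fderiv ℝ G p).map_smul r a

theorem dirDeriv_neg : dirDeriv a (fun q => -A q) p = -dirDeriv a A p := by
  simp [dirDeriv, fderiv_fun_neg]

theorem dirDeriv_sub (hA : DifferentiableAt ℝ A p) (hB : DifferentiableAt ℝ B p) :
    dirDeriv a (fun q => A q - B q) p = dirDeriv a A p - dirDeriv a B p := by
  simp [dirDeriv, fderiv_fun_sub hA hB]

theorem dirDeriv_mul (hA : DifferentiableAt ℝ A p) (hB : DifferentiableAt ℝ B p) :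
    dirDeriv a (fun q => A q * B q) p = A p * dirDeriv a B p + B p * dirDeriv a A p := by
  simp [dirDeriv, fderiv_fun_mul hA hB]

theorem dirDeriv_const_mul (r : ℝ) (hA : DifferentiableAt ℝ A p) :
    dirDeriv a (fun q => r * A q) p = r * dirDeriv a A p := by
  simp [dirDeriv, fderiv_const_mul hA]

theorem dirDeriv_sq (hA : DifferentiableAt ℝ A p) :
    dirDeriv a (fun q => A q ^ 2) p = 2 * A p * dirDeriv a A p := by
  simp only [sq, dirDeriv_mul hA hA]
  ring

theorem dirDeriv_exp (hA : DifferentiableAt ℝ A p) :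
    dirDeriv a (fun q => Real.exp (A q)) p = Real.exp (A p) * dirDeriv a A p := by
  simp [dirDeriv, hA.hasFDerivAt.exp.fderiv]

theorem dirDeriv_sum {ι : Type*} (s : Finset ι) {A : ι → E → ℝ}
    (hA : ∀ i ∈ s, DifferentiableAt ℝ (A i) p) :
    dirDeriv a (fun q => ∑ i ∈ s, A i q) p = ∑ i ∈ s, dirDeriv a (A i) p := by
  simp [dirDeriv, fderiv_fun_sum hA]

theorem dirDeriv_comp_add_right (hU : IsOpen U) (h : ∀ q ∈ U, G (q + c) = G q) (hp : p ∈ U) :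
    dirDeriv a G (p + c) = dirDeriv a G p := by
  rw [dirDeriv, ← fderiv_comp_add_right]
  exact dirDeriv_congr_of_eqOn hU h hp

theorem ContDiffOn.differentiableAt_of_isOpen (hG : ContDiffOn ℝ ∞ G U) (hU : IsOpen U)
    (hp : p ∈ U) : DifferentiableAt ℝ G p :=
  (hG.differentiableOn (by simp)).differentiableAt (hU.mem_nhds hp)

theorem ContDiffOn.dirDeriv (hG : ContDiffOn ℝ ∞ G U) (hU : IsOpen U) :
    ContDiffOn ℝ ∞ (dirDeriv a G) U :=
  (hG.fderiv_of_isOpen hU le_rfl).clm_apply contDiffOn_const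

theorem dirDeriv_comm (hG : ContDiffOn ℝ ∞ G U) (hU : IsOpen U) (hp : p ∈ U) (a b : E) :
    dirDeriv a (dirDeriv b G) p = dirDeriv b (dirDeriv a G) p := by
  have hGp : ContDiffAt ℝ ∞ G p := hG.contDiffAt (hU.mem_nhds hp)
  have hd : DifferentiableAt ℝ (fderiv ℝ G) p :=
    (hGp.fderiv_right (m := ∞) le_rfl).differentiableAt (by simp)
  have hsecond : ∀ a b : E, dirDeriv a (dirDeriv b G) p = fderiv ℝ (fderiv ℝ G) p a b :=
    fun a b => by
      change fderiv ℝ (fun q => fderiv ℝ G q b) p a = _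
      rw [fderiv_clm_apply hd (differentiableAt_const b)]
      simp
  rw [hsecond, hsecond, hGp.isSymmSndFDerivAt (by simpa using ENat.LEInfty.out) a b]

theorem hasDerivAt_comp_line {s : ℝ} (hG : DifferentiableAt ℝ G (p + s • a)) :
    HasDerivAt (fun s : ℝ => G (p + s • a)) (dirDeriv a G (p + s • a)) s := by
  have hline : HasDerivAt (fun s : ℝ => p + s • a) a s := by
    simpa using ((hasDerivAt_id s).smul_const a).const_add p
  exact hG.hasFDerivAt.comp_hasDerivAt s hline

theorem dirDeriv_eq_zero_of_isLocalMin_line (hG : DifferentiableAt ℝ G p)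
    (h : IsLocalMin (fun s : ℝ => G (p + s • a)) 0) : dirDeriv a G p = 0 := by
  simpa using h.hasDerivAt_eq_zero (hasDerivAt_comp_line (s := 0) (by simpa using hG))

theorem dirDeriv_dirDeriv_nonneg_of_isLocalMin_line (hG : ContDiffOn ℝ ∞ G U) (hU : IsOpen U)
    (hp : p ∈ U) (h : IsLocalMin (fun s : ℝ => G (p + s • a)) 0) :
    0 ≤ dirDeriv a (dirDeriv a G) p := by
  have hline : ∀ᶠ s : ℝ in 𝓝 0, p + s • a ∈ U := by
    have : Continuous fun s : ℝ => p + s • a := by fun_prop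
    exact this.continuousAt.preimage_mem_nhds (by simpa using hU.mem_nhds hp)
  have hderiv : deriv (fun s : ℝ => G (p + s • a)) =ᶠ[𝓝 0] fun s => dirDeriv a G (p + s • a) :=
    hline.mono fun s hs => (hasDerivAt_comp_line (hG.differentiableAt_of_isOpen hU hs)).deriv
  have hcont : ContinuousAt (fun s : ℝ => G (p + s • a)) 0 :=
    (hasDerivAt_comp_line (by simpa using hG.differentiableAt_of_isOpen hU hp)).continuousAt
  have h2 := h.deriv_deriv_nonneg hcont
  rwa [hderiv.deriv_eq, (hasDerivAt_comp_line (s := 0)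
    (by simpa using (hG.dirDeriv hU).differentiableAt_of_isOpen hU hp)).deriv, zero_smul,
    add_zero] at h2

theorem dirDeriv_sub_nonneg_of_isMinOn {S : Set E} {q : E} (h : IsMinOn G S p) (hS : Convex ℝ S)
    (hp : p ∈ S) (hq : q ∈ S) (hG : DifferentiableAt ℝ G p) : 0 ≤ dirDeriv (q - p) G p :=
  h.localize.hasFDerivWithinAt_nonneg hG.hasFDerivAt.hasFDerivWithinAt
    (sub_mem_posTangentConeAt_of_segment_subset (hS.segment_subset hp hq))

end DirDeriv

section Frame

variable {E : Type*} [NormedAddCommGroup E] [NormedSpace ℝ E] {ι : Type*} [Fintype ι]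

def lapAlong (e : ι → E) (G : E → ℝ) : E → ℝ :=
  fun p => ∑ i, dirDeriv (e i) (dirDeriv (e i) G) p

def gradSqAlong (e : ι → E) (G : E → ℝ) : E → ℝ :=
  fun p => ∑ i, dirDeriv (e i) G p ^ 2

def hessSqAlong (e : ι → E) (G : E → ℝ) : E → ℝ :=
  fun p => ∑ i, ∑ j, dirDeriv (e i) (dirDeriv (e j) G) p ^ 2

variable {e : ι → E} {a p : E} {A B G H : E → ℝ} {U : Set E}

theorem ContDiffOn.lapAlong (hG : ContDiffOn ℝ ∞ G U) (hU : IsOpen U) :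
    ContDiffOn ℝ ∞ (lapAlong e G) U :=
  ContDiffOn.sum fun _ _ => (hG.dirDeriv hU).dirDeriv hU

theorem ContDiffOn.gradSqAlong (hG : ContDiffOn ℝ ∞ G U) (hU : IsOpen U) :
    ContDiffOn ℝ ∞ (gradSqAlong e G) U :=
  ContDiffOn.sum fun _ _ => (hG.dirDeriv hU).pow 2

theorem lapAlong_congr_of_eqOn (hU : IsOpen U) (h : EqOn A B U) (hp : p ∈ U) :
    lapAlong e A p = lapAlong e B p :=
  Finset.sum_congr rfl fun _ _ =>
    dirDeriv_congr_of_eqOn hU (fun _ hq => dirDeriv_congr_of_eqOn hU h hq) hp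

theorem lapAlong_sub (hA : ContDiffOn ℝ ∞ A U) (hB : ContDiffOn ℝ ∞ B U) (hU : IsOpen U)
    (hp : p ∈ U) : lapAlong e (fun q => A q - B q) p = lapAlong e A p - lapAlong e B p := by
  have hfirst : ∀ i, EqOn (dirDeriv (e i) fun q => A q - B q)
      (fun q => dirDeriv (e i) A q - dirDeriv (e i) B q) U := fun i q hq =>
    dirDeriv_sub (hA.differentiableAt_of_isOpen hU hq) (hB.differentiableAt_of_isOpen hU hq)
  simp only [lapAlong, ← Finset.sum_sub_distrib]
  refine Finset.sum_congr rfl fun i _ => ?_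
  rw [dirDeriv_congr_of_eqOn hU (hfirst i) hp,
    dirDeriv_sub ((hA.dirDeriv hU).differentiableAt_of_isOpen hU hp)
      ((hB.dirDeriv hU).differentiableAt_of_isOpen hU hp)]

theorem lapAlong_neg : lapAlong e (fun q => -A q) p = -lapAlong e A p := by
  have hfirst : ∀ b : E, (dirDeriv b fun q => -A q) = fun q => -dirDeriv b A q :=
    fun b => funext fun q => dirDeriv_neg
  simp only [lapAlong, hfirst, dirDeriv_neg, Finset.sum_neg_distrib]

theorem lapAlong_comp_add_right {c : E} (hU : IsOpen U) (h : ∀ q ∈ U, G (q + c) = G q)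
    (hp : p ∈ U) : lapAlong e G (p + c) = lapAlong e G p :=
  Finset.sum_congr rfl fun _ _ =>
    dirDeriv_comp_add_right hU (fun _ hq => dirDeriv_comp_add_right hU h hq) hp

theorem dirDeriv_lapAlong (hG : ContDiffOn ℝ ∞ G U) (hU : IsOpen U) (hp : p ∈ U) (a : E) :
    dirDeriv a (lapAlong e G) p = lapAlong e (dirDeriv a G) p := by
  unfold lapAlong
  rw [dirDeriv_sum _ fun i _ =>
    ((hG.dirDeriv hU).dirDeriv hU).differentiableAt_of_isOpen hU hp]
  refine Finset.sum_congr rfl fun i _ => ?_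
  rw [dirDeriv_comm (hG.dirDeriv hU) hU hp a (e i)]
  exact dirDeriv_congr_of_eqOn hU (fun q hq => dirDeriv_comm hG hU hq a (e i)) hp

/-- Bochner's formula in flat space. -/
theorem lapAlong_gradSqAlong (hH : ContDiffOn ℝ ∞ H U) (hU : IsOpen U) (hp : p ∈ U) :
    lapAlong e (gradSqAlong e H) p = 2 * hessSqAlong e H p
      + ∑ j, 2 * dirDeriv (e j) H p * dirDeriv (e j) (lapAlong e H) p := by
  have hD : ∀ b, ContDiffOn ℝ ∞ (dirDeriv b H) U := fun b => hH.dirDeriv hU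
  have hDD : ∀ b c, ContDiffOn ℝ ∞ (dirDeriv b (dirDeriv c H)) U := fun b c => (hD c).dirDeriv hU
  have hfirst : ∀ i, EqOn (dirDeriv (e i) (gradSqAlong e H))
      (fun q => ∑ j, 2 * (dirDeriv (e j) H q * dirDeriv (e i) (dirDeriv (e j) H) q)) U := by
    intro i q hq
    unfold gradSqAlong
    rw [dirDeriv_sum (A := fun j q => dirDeriv (e j) H q ^ 2) _
      fun j _ => ((hD _).differentiableAt_of_isOpen hU hq).pow 2]
    refine Finset.sum_congr rfl fun j _ => ?_
    rw [dirDeriv_sq ((hD _).differentiableAt_of_isOpen hU hq), mul_assoc]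
  have hsecond : ∀ i, dirDeriv (e i) (dirDeriv (e i) (gradSqAlong e H)) p
      = ∑ j, 2 * (dirDeriv (e i) (dirDeriv (e j) H) p ^ 2
        + dirDeriv (e j) H p * dirDeriv (e i) (dirDeriv (e i) (dirDeriv (e j) H)) p) := by
    intro i
    rw [dirDeriv_congr_of_eqOn hU (hfirst i) hp, dirDeriv_sum _ fun j _ =>
      (contDiffOn_const.mul ((hD _).mul (hDD _ _))).differentiableAt_of_isOpen hU hp]
    refine Finset.sum_congr rfl fun j _ => ?_
    rw [dirDeriv_const_mul _ (((hD _).mul (hDD _ _)).differentiableAt_of_isOpen hU hp),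
      dirDeriv_mul ((hD _).differentiableAt_of_isOpen hU hp)
        ((hDD _ _).differentiableAt_of_isOpen hU hp)]
    ring
  have hthird : ∀ j, ∑ i, dirDeriv (e i) (dirDeriv (e i) (dirDeriv (e j) H)) p
      = dirDeriv (e j) (lapAlong e H) p := fun j => (dirDeriv_lapAlong hH hU hp (e j)).symm
  simp only [lapAlong, hsecond, hessSqAlong, mul_add, Finset.sum_add_distrib, Finset.mul_sum]
  congr 1
  rw [Finset.sum_comm]
  refine Finset.sum_congr rfl fun j _ => ?_
  rw [← hthird, Finset.mul_sum]
  exact Finset.sum_congr rfl fun i _ => by ring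

theorem sq_lapAlong_le : lapAlong e G p ^ 2 ≤ Fintype.card ι * hessSqAlong e G p :=
  calc lapAlong e G p ^ 2
      ≤ Fintype.card ι * ∑ i, dirDeriv (e i) (dirDeriv (e i) G) p ^ 2 := by
        simpa [lapAlong] using sq_sum_le_card_mul_sum_sq (s := Finset.univ)
          (f := fun i => dirDeriv (e i) (dirDeriv (e i) G) p)
    _ ≤ Fintype.card ι * ∑ i, ∑ j, dirDeriv (e i) (dirDeriv (e j) G) p ^ 2 := by
        gcongr with i hi
        exact Finset.single_le_sum (f := fun j => dirDeriv (e i) (dirDeriv (e j) G) p ^ 2)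
          (fun j _ => sq_nonneg _) (Finset.mem_univ i)

end Frame

section BackwardHeat

variable {E : Type*} [NormedAddCommGroup E] [NormedSpace ℝ E] {ι : Type*} [Fintype ι]
  {e : ι → E} {a p : E} {F H : E → ℝ} {U : Set E}

theorem dirDeriv_log_of_backward_heat (hF : ContDiffOn ℝ ∞ F U) (hU : IsOpen U)
    (hpos : ∀ q ∈ U, 0 < F q) (heat : ∀ q ∈ U, dirDeriv a F q = -lapAlong e F q) (hp : p ∈ U) :
    dirDeriv a (fun q => Real.log (F q)) p
      = -lapAlong e (fun q => Real.log (F q)) p - gradSqAlong e (fun q => Real.log (F q)) p := by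
  set H := fun q => Real.log (F q)
  have hH : ContDiffOn ℝ ∞ H U := hF.log fun q hq => (hpos q hq).ne'
  have hexp : ∀ q ∈ U, F q = Real.exp (H q) := fun q hq => (Real.exp_log (hpos q hq)).symm
  have hfirst : ∀ b, ∀ q ∈ U, dirDeriv b F q = F q * dirDeriv b H q := by
    intro b q hq
    rw [dirDeriv_congr_of_eqOn hU hexp hq, dirDeriv_exp (hH.differentiableAt_of_isOpen hU hq),
      ← hexp q hq]
  have hsecond : ∀ i, dirDeriv (e i) (dirDeriv (e i) F) p
      = F p * (dirDeriv (e i) (dirDeriv (e i) H) p + dirDeriv (e i) H p ^ 2) := by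
    intro i
    rw [dirDeriv_congr_of_eqOn hU (hfirst _) hp, dirDeriv_mul (hF.differentiableAt_of_isOpen hU hp)
      ((hH.dirDeriv hU).differentiableAt_of_isOpen hU hp), hfirst _ p hp]
    ring
  have hcancel : F p * dirDeriv a H p = F p * (-lapAlong e H p - gradSqAlong e H p) := by
    rw [← hfirst a p hp, heat p hp]
    simp only [lapAlong, gradSqAlong, hsecond, ← Finset.mul_sum, Finset.sum_add_distrib]
    ring
  exact mul_left_cancel₀ (hpos p hp).ne' hcancel

theorem dirDeriv_lapAlong_eq (hH : ContDiffOn ℝ ∞ H U) (hU : IsOpen U)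
    (hevol : ∀ q ∈ U, dirDeriv a H q = -lapAlong e H q - gradSqAlong e H q) (hp : p ∈ U) :
    dirDeriv a (lapAlong e H) p = -lapAlong e (lapAlong e H) p
      - ∑ j, 2 * dirDeriv (e j) H p * dirDeriv (e j) (lapAlong e H) p
      - 2 * hessSqAlong e H p := by
  rw [dirDeriv_lapAlong hH hU hp, lapAlong_congr_of_eqOn hU hevol hp,
    lapAlong_sub (hH.lapAlong hU).neg (hH.gradSqAlong hU) hU hp, lapAlong_neg,
    lapAlong_gradSqAlong hH hU hp]
  ring

theorem lapAlong_riccati (hH : ContDiffOn ℝ ∞ H U) (hU : IsOpen U)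
    (hevol : ∀ q ∈ U, dirDeriv a H q = -lapAlong e H q - gradSqAlong e H q) (hp : p ∈ U) :
    (Fintype.card ι / 2 : ℝ) * (dirDeriv a (lapAlong e H) p + lapAlong e (lapAlong e H) p
      + ∑ j, 2 * dirDeriv (e j) H p * dirDeriv (e j) (lapAlong e H) p)
      + lapAlong e H p ^ 2 ≤ 0 := by
  have hsq := sq_lapAlong_le (e := e) (G := H) (p := p)
  rw [dirDeriv_lapAlong_eq hH hU hevol hp]
  linarith

end BackwardHeat

section Spacetime

variable {n : ℕ}

def timeDir : ℝ × (Fin n → ℝ) := (1, 0)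

def spaceDir (i : Fin n) : ℝ × (Fin n → ℝ) := (0, Pi.single i 1)

theorem exists_isMinOn_prod_univ_of_periodic {X : Type*} [TopologicalSpace X]
    {A : Set X} (hA : IsCompact A) (hne : A.Nonempty) {Φ : X × (Fin n → ℝ) → ℝ}
    (hΦ : ContinuousOn Φ (A ×ˢ univ))
    (hper : ∀ s ∈ A, ∀ y (m : Fin n → ℤ), Φ (s, y + fun i => (m i : ℝ)) = Φ (s, y)) :
    ∃ p ∈ A ×ˢ univ, IsMinOn Φ (A ×ˢ univ) p := by
  obtain ⟨p, hpK, hmin⟩ := (hA.prod isCompact_Icc).exists_isMinOn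
    (hne.prod (nonempty_Icc.2 zero_le_one)) (hΦ.mono (prod_mono subset_rfl (subset_univ _)))
  refine ⟨p, ⟨hpK.1, trivial⟩, ?_⟩
  rintro ⟨s, y⟩ ⟨hs, -⟩
  have hfract : (fun i => Int.fract (y i)) ∈ Icc (0 : Fin n → ℝ) 1 :=
    ⟨fun i => Int.fract_nonneg _, fun i => (Int.fract_lt_one _).le⟩
  have hy : y = (fun i => Int.fract (y i)) + fun i => ((⌊y i⌋ : ℤ) : ℝ) :=
    funext fun i => (Int.fract_add_floor (y i)).symm
  calc Φ p ≤ Φ (s, fun i => Int.fract (y i)) := hmin ⟨hs, hfract⟩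
    _ = Φ (s, y) := by
      conv_rhs => rw [hy]
      exact (hper s hs _ _).symm

theorem isLocalMin_line_spaceDir {W : ℝ × (Fin n → ℝ) → ℝ} {p : ℝ × (Fin n → ℝ)}
    (h : ∀ y, W p ≤ W (p.1, y)) (i : Fin n) :
    IsLocalMin (fun s : ℝ => W (p + s • spaceDir i)) 0 :=
  Eventually.of_forall fun s => by
    have hq : p + s • spaceDir i = (p.1, p.2 + s • Pi.single i 1) := by ext <;> simp [spaceDir]
    simpa [hq] using h (p.2 + s • Pi.single i 1)

theorem mul_sub_nonneg_of_isMinOn {W : ℝ × (Fin n → ℝ) → ℝ} {t T : ℝ} {p : ℝ × (Fin n → ℝ)}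
    (hmin : IsMinOn (fun q => (T - q.1) * W q) (Icc t T ×ˢ univ) p) (hp : p ∈ Icc t T ×ˢ univ)
    (hW : DifferentiableAt ℝ W p) :
    0 ≤ (T - p.1) * ((T - p.1) * dirDeriv timeDir W p - W p) := by
  have h := dirDeriv_sub_nonneg_of_isMinOn hmin ((convex_Icc t T).prod convex_univ) hp
    (show (T, p.2) ∈ Icc t T ×ˢ univ from ⟨⟨hp.1.1.trans hp.1.2, le_rfl⟩, trivial⟩)
    ((differentiableAt_const T).sub differentiableAt_fst |>.mul hW)
  have hdir : (T, p.2) - p = (T - p.1) • timeDir := by ext <;> simp [timeDir]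
  have hfst : dirDeriv timeDir (fun q : ℝ × (Fin n → ℝ) => T - q.1) p = -1 := by
    simp [dirDeriv, timeDir, fderiv_const_sub, fderiv_fst]
  rw [hdir, dirDeriv_smul, dirDeriv_mul (by fun_prop) hW, hfst] at h
  linarith

theorem le_mul_of_riccati_of_lt {W : ℝ × (Fin n → ℝ) → ℝ} {b : Fin n → ℝ × (Fin n → ℝ) → ℝ}
    {c : ℝ} (hc : 0 ≤ c) (hW : ContDiffOn ℝ ∞ W (Iio 0 ×ˢ univ))
    (hper : ∀ m : Fin n → ℤ, ∀ q ∈ Iio 0 ×ˢ univ, W (q + (0, fun i => (m i : ℝ))) = W q)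
    (hric : ∀ q ∈ Iio 0 ×ˢ univ, c * (dirDeriv timeDir W q + lapAlong spaceDir W q
      + ∑ i, b i q * dirDeriv (spaceDir i) W q) + W q ^ 2 ≤ 0)
    {t T : ℝ} (htT : t < T) (hT : T < 0) (x : Fin n → ℝ) : -c ≤ (T - t) * W (t, x) := by
  by_contra! hlt
  have hU : IsOpen (Iio (0 : ℝ) ×ˢ (univ : Set (Fin n → ℝ))) := isOpen_Iio.prod isOpen_univ
  set S := Icc t T ×ˢ (univ : Set (Fin n → ℝ))
  have hSU : S ⊆ Iio 0 ×ˢ univ := prod_mono (fun s hs => hs.2.trans_lt hT) subset_rfl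
  set Φ := fun q : ℝ × (Fin n → ℝ) => (T - q.1) * W q
  have hΦ : ContDiffOn ℝ ∞ Φ (Iio 0 ×ˢ univ) := (contDiffOn_const.sub contDiffOn_fst).mul hW
  obtain ⟨p, hpS, hmin⟩ := exists_isMinOn_prod_univ_of_periodic isCompact_Icc
    (nonempty_Icc.2 htT.le) (hΦ.continuousOn.mono hSU) fun s hs y m => by
      simpa [Φ] using congrArg ((T - s) * ·) (hper m (s, y) (hSU ⟨hs, trivial⟩))
  have hpU := hSU hpS
  have hle : ∀ q ∈ S, Φ p ≤ Φ q := isMinOn_iff.1 hmin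
  have hΦp : (T - p.1) * W p < -c := (hle (t, x) ⟨⟨le_rfl, htT.le⟩, trivial⟩).trans_lt hlt
  have ha : 0 < T - p.1 := by
    refine sub_pos.2 (hpS.1.2.lt_of_ne fun h => ?_)
    simp only [h, sub_self, zero_mul] at hΦp
    linarith
  have hWp : W p < 0 := neg_of_mul_neg_right (hΦp.trans_le (neg_nonpos.2 hc)) ha.le
  have hline : ∀ i, IsLocalMin (fun s : ℝ => W (p + s • spaceDir i)) 0 :=
    isLocalMin_line_spaceDir fun y => le_of_mul_le_mul_left (hle (p.1, y) ⟨hpS.1, trivial⟩) ha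
  have hgrad : ∀ i, dirDeriv (spaceDir i) W p = 0 := fun i =>
    dirDeriv_eq_zero_of_isLocalMin_line (hW.differentiableAt_of_isOpen hU hpU) (hline i)
  have hlap : 0 ≤ lapAlong spaceDir W p := Finset.sum_nonneg fun i _ =>
    dirDeriv_dirDeriv_nonneg_of_isLocalMin_line hW hU hpU (hline i)
  have htime : 0 ≤ (T - p.1) * dirDeriv timeDir W p - W p := (mul_nonneg_iff_of_pos_left ha).1
    (mul_sub_nonneg_of_isMinOn hmin hpS (hW.differentiableAt_of_isOpen hU hpU))
  have hq := hric p hpU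
  simp only [hgrad, mul_zero, Finset.sum_const_zero, add_zero] at hq
  nlinarith [mul_nonneg hc htime, mul_nonneg (mul_nonneg ha.le hc) hlap,
    mul_pos_of_neg_of_neg (by linarith : (T - p.1) * W p + c < 0) hWp]

theorem le_mul_of_riccati {W : ℝ × (Fin n → ℝ) → ℝ} {b : Fin n → ℝ × (Fin n → ℝ) → ℝ}
    {c : ℝ} (hc : 0 ≤ c) (hW : ContDiffOn ℝ ∞ W (Iio 0 ×ˢ univ))
    (hper : ∀ m : Fin n → ℤ, ∀ q ∈ Iio 0 ×ˢ univ, W (q + (0, fun i => (m i : ℝ))) = W q)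
    (hric : ∀ q ∈ Iio 0 ×ˢ univ, c * (dirDeriv timeDir W q + lapAlong spaceDir W q
      + ∑ i, b i q * dirDeriv (spaceDir i) W q) + W q ^ 2 ≤ 0)
    {t : ℝ} (ht : t < 0) (x : Fin n → ℝ) : -c ≤ -t * W (t, x) := by
  have hlim : Tendsto (fun T => (T - t) * W (t, x)) (𝓝[<] 0) (𝓝 ((0 - t) * W (t, x))) :=
    ((continuous_id.sub continuous_const).mul continuous_const).continuousAt.tendsto.mono_left
      nhdsWithin_le_nhds
  have hev : ∀ᶠ T in 𝓝[<] 0, -c ≤ (T - t) * W (t, x) := by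
    filter_upwards [Ioo_mem_nhdsLT ht] with T hT
    exact le_mul_of_riccati_of_lt hc hW hper hric hT.1 hT.2 x
  simpa using ge_of_tendsto hlim hev

theorem lap_neg_sub_const (g : (Fin n → ℝ) → ℝ) (C : ℝ) (x : Fin n → ℝ) :
    lap (fun y => -g y - C) x = -lap g x := by
  have hneg : ∀ i (h : (Fin n → ℝ) → ℝ), pd i (fun y => -h y) = fun y => -pd i h y :=
    fun i h => funext fun y => by simp [pd, fderiv_fun_neg]
  have hsub : ∀ i, pd i (fun y => -g y - C) = fun y => -pd i g y :=
    fun i => funext fun y => by simp [pd, fderiv_sub_const, fderiv_fun_neg]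
  simp only [lap, hsub, hneg, Finset.sum_neg_distrib]

theorem pd_slice {G : ℝ × (Fin n → ℝ) → ℝ} {t : ℝ} {x : Fin n → ℝ}
    (hG : DifferentiableAt ℝ G (t, x)) (i : Fin n) :
    pd i (fun y => G (t, y)) x = dirDeriv (spaceDir i) G (t, x) := by
  have hι : HasFDerivAt (fun y => ((t, y) : ℝ × (Fin n → ℝ)))
      (ContinuousLinearMap.inr ℝ ℝ (Fin n → ℝ)) x :=
    (hasFDerivAt_const t x).prodMk (hasFDerivAt_id x)
  have hslice : HasFDerivAt (fun y => G (t, y))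
      ((fderiv ℝ G (t, x)).comp (ContinuousLinearMap.inr ℝ ℝ (Fin n → ℝ))) x :=
    hG.hasFDerivAt.comp x hι
  rw [pd, hslice.fderiv]
  rfl

theorem deriv_slice {G : ℝ × (Fin n → ℝ) → ℝ} {t : ℝ} {x : Fin n → ℝ}
    (hG : DifferentiableAt ℝ G (t, x)) :
    deriv (fun s => G (s, x)) t = dirDeriv timeDir G (t, x) :=
  (hG.hasFDerivAt.comp_hasDerivAt t ((hasDerivAt_id t).prodMk (hasDerivAt_const t x))).deriv

theorem lap_slice {G : ℝ × (Fin n → ℝ) → ℝ} {U : Set (ℝ × (Fin n → ℝ))} {t : ℝ}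
    (hG : ContDiffOn ℝ ∞ G U) (hU : IsOpen U) (hslice : ∀ y, (t, y) ∈ U) (x : Fin n → ℝ) :
    lap (fun y => G (t, y)) x = lapAlong spaceDir G (t, x) := by
  refine Finset.sum_congr rfl fun i _ => ?_
  have hfirst : pd i (fun y => G (t, y)) = fun y => dirDeriv (spaceDir i) G (t, y) :=
    funext fun y => pd_slice (hG.differentiableAt_of_isOpen hU (hslice y)) i
  rw [hfirst]
  exact pd_slice ((hG.dirDeriv hU).differentiableAt_of_isOpen hU (hslice x)) i

theorem dirDeriv_timeDir_eq_neg_lapAlong {G : ℝ × (Fin n → ℝ) → ℝ}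
    (hG : ContDiffOn ℝ ∞ G (Iio 0 ×ˢ univ))
    (heat : ∀ t < (0 : ℝ), ∀ x, deriv (fun s => G (s, x)) t = -lap (fun y => G (t, y)) x) :
    ∀ q ∈ Iio 0 ×ˢ univ, dirDeriv timeDir G q = -lapAlong spaceDir G q := by
  have hU : IsOpen (Iio (0 : ℝ) ×ˢ (univ : Set (Fin n → ℝ))) := isOpen_Iio.prod isOpen_univ
  rintro ⟨t, x⟩ hq
  rw [← deriv_slice (hG.differentiableAt_of_isOpen hU hq), heat t hq.1 x,
    lap_slice hG hU (fun y => ⟨hq.1, trivial⟩)]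

end Spacetime

theorem backward_harnack_P_nonpos_general
    (n : ℕ) (f : ℝ → (Fin n → ℝ) → ℝ)
    (hsmooth : ContDiffOn ℝ (⊤ : ℕ∞) (fun p : ℝ × (Fin n → ℝ) => f p.1 p.2)
      (Set.Iio 0 ×ˢ Set.univ))
    (hpos : ∀ t < (0:ℝ), ∀ x : Fin n → ℝ, 0 < f t x)
    (hbheat : ∀ t < (0:ℝ), ∀ x : Fin n → ℝ, deriv (fun s => f s x) t = -lap (f t) x)
    (hper : ∀ t < (0:ℝ), ∀ x : Fin n → ℝ, ∀ m : Fin n → ℤ,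
      f t (x + fun i => (m i : ℝ)) = f t x)
    (v : ℝ → (Fin n → ℝ) → ℝ)
    (hv : ∀ t x, v t x = -Real.log (f t x) - (n / 2 : ℝ) * Real.log (4 * π * (-t))) :
    ∀ t < (0:ℝ), ∀ x : Fin n → ℝ,
      2 * lap (v t) x - gradSq (v t) x - 2 * n / (-t) ≤ 0 := by
  intro t ht x
  have hU : IsOpen (Iio (0 : ℝ) ×ˢ (univ : Set (Fin n → ℝ))) := isOpen_Iio.prod isOpen_univ
  set H := fun q : ℝ × (Fin n → ℝ) => Real.log (f q.1 q.2)
  have hHsmooth : ContDiffOn ℝ ∞ H (Iio 0 ×ˢ univ) := hsmooth.log fun q hq => (hpos _ hq.1 _).ne'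
  have hevol : ∀ q ∈ Iio 0 ×ˢ univ, dirDeriv timeDir H q
      = -lapAlong spaceDir H q - gradSqAlong spaceDir H q := fun q =>
    dirDeriv_log_of_backward_heat hsmooth hU (fun q hq => hpos _ hq.1 _)
      (dirDeriv_timeDir_eq_neg_lapAlong hsmooth hbheat)
  have hHper : ∀ m : Fin n → ℤ, ∀ q ∈ Iio 0 ×ˢ univ, H (q + (0, fun i => (m i : ℝ))) = H q := by
    rintro m ⟨s, y⟩ ⟨hs, -⟩
    simp [H, hper s hs]
  have hbound : -(n / 2 : ℝ) ≤ -t * lapAlong spaceDir H (t, x) :=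
    le_mul_of_riccati (b := fun j q => 2 * dirDeriv (spaceDir j) H q) (by positivity)
      (hHsmooth.lapAlong hU) (fun m _ => lapAlong_comp_add_right hU (hHper m))
      (fun q hq => by simpa using lapAlong_riccati hHsmooth hU hevol hq) ht x
  have hlap : lap (v t) x = -lapAlong spaceDir H (t, x) := by
    rw [show v t = fun y => -H (t, y) - (n / 2 : ℝ) * Real.log (4 * π * (-t)) from funext (hv t),
      lap_neg_sub_const, lap_slice hHsmooth hU (fun y => ⟨ht, trivial⟩)]
  have hgrad : 0 ≤ gradSq (v t) x := Finset.sum_nonneg fun i _ => sq_nonneg _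
  have hlap_le : 2 * lap (v t) x ≤ 2 * n / -t := by
    rw [hlap, le_div_iff₀ (neg_pos.2 ht)]
    nlinarith [Nat.cast_nonneg (α := ℝ) n]
  linarith

/-- Proposition 5.2: for a positive periodic solution of the backward heat equation
(on `t < 0`, with `τ = −t`), `v = −ln f − (n/2)ln(4πτ)` satisfies
`2Δv − |∇v|² − 2n/τ ≤ 0`. -/
theorem backward_harnack_P_nonpos
    (n : ℕ) (hn : 1 ≤ n) (f : ℝ → (Fin n → ℝ) → ℝ)
    (hsmooth : ContDiffOn ℝ (⊤ : ℕ∞) (fun p : ℝ × (Fin n → ℝ) => f p.1 p.2)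
      (Set.Iio 0 ×ˢ Set.univ))
    (hpos : ∀ t < (0:ℝ), ∀ x : Fin n → ℝ, 0 < f t x)
    (hbheat : ∀ t < (0:ℝ), ∀ x : Fin n → ℝ, deriv (fun s => f s x) t = -lap (f t) x)
    (hper : ∀ t < (0:ℝ), ∀ x : Fin n → ℝ, ∀ m : Fin n → ℤ,
      f t (x + fun i => (m i : ℝ)) = f t x)
    (v : ℝ → (Fin n → ℝ) → ℝ)
    (hv : ∀ t x, v t x = -Real.log (f t x) - (n / 2 : ℝ) * Real.log (4 * π * (-t))) :
    ∀ t < (0:ℝ), ∀ x : Fin n → ℝ,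
      2 * lap (v t) x - gradSq (v t) x - 2 * n / (-t) ≤ 0 :=
  backward_harnack_P_nonpos_general n f hsmooth hpos hbheat hper v hv
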